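/- The compression of a reticulation-visible rooted phylogenetic network is a tree-child network: if every reticulate and redundant node of N is visible, then in the compression N̄ every non-leaf node has a child that is a leaf, a tree node, or a redundant node. -/

import Mathlib

open Relation

variable {V : Type*}

/-- Indegree of a node in a digraph given by an edge relation. -/
noncomputable def indeg (E : V → V → Prop) (v : V) : ℕ := Set.ncard {u | E u v}

/-- Outdegree of a node in a digraph given by an edge relation. -/
noncomputable def outdeg (E : V → V → Prop) (v : V) : ℕ := Set.ncard {w | E v w}

/-- A directed path from `x` to `y` in the digraph `E`, recorded as the list of its nodes. -/
def IsDirPathE (E : V → V → Prop) (x y : V) (p : List V) : Prop :=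
  p.head? = some x ∧ p.getLast? = some y ∧ p.Chain' E

/-- `Dom E root x y`: `x` is a dominator of `y`, i.e. `x` is an ancestor of `y` and every
directed path from `root` to `y` contains `x`. -/
def Dom (E : V → V → Prop) (root x y : V) : Prop :=
  Relation.TransGen E x y ∧ ∀ p, IsDirPathE E root y p → x ∈ p

/-- A rooted phylogenetic network: a rooted acyclic digraph with a unique root of indegree 0
and outdegree ≥ 1, in which every non-root node has indegree 1 or outdegree 1, and every node
is reachable from the root. -/
structure RPN (V : Type*) [Fintype V] where
  E : V → V → Prop
  root : V
  acyclic : ∀ v, ¬ Relation.TransGen E v v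
  root_indeg : indeg E root = 0
  root_outdeg : 1 ≤ outdeg E root
  degree_cond : ∀ v, v ≠ root → indeg E v = 1 ∨ outdeg E v = 1
  reachable : ∀ v, Relation.ReflTransGen E root v

namespace RPN

variable [Fintype V] (N : RPN V)

/-- A leaf: indegree 1 and outdegree 0. -/
def isLeaf (v : V) : Prop := indeg N.E v = 1 ∧ outdeg N.E v = 0

/-- A reticulate node: indegree at least 2. -/
def isRetic (v : V) : Prop := 2 ≤ indeg N.E v

/-- A tree node: the root, or a node of indegree 1 and outdegree at least 2. -/
def isTreeN (v : V) : Prop := v = N.root ∨ (indeg N.E v = 1 ∧ 2 ≤ outdeg N.E v)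

/-- A redundant node: indegree 1 and outdegree 1. -/
def isRedund (v : V) : Prop := indeg N.E v = 1 ∧ outdeg N.E v = 1

/-- A directed path from `x` to `y` in `N`. -/
def IsDirPath (x y : V) (p : List V) : Prop := IsDirPathE N.E x y p

/-- `x` lies on every directed path from the root to `y`. -/
def Dominates (x y : V) : Prop := ∀ p, N.IsDirPath N.root y p → x ∈ p

/-- A node is visible if it lies on every root-to-`ℓ` path for some leaf `ℓ`. -/
def Visible (x : V) : Prop := ∃ ℓ, N.isLeaf ℓ ∧ N.Dominates x ℓ

/-- Tree-child: every non-leaf node has a child that is a leaf, a tree node, or a redundant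
node. -/
def TreeChild : Prop :=
  ∀ u, ¬ N.isLeaf u → ∃ c, N.E u c ∧ (N.isLeaf c ∨ N.isTreeN c ∨ N.isRedund c)

/-- Edge of the subgraph induced by the tree nodes. -/
def treeE (u v : V) : Prop := N.E u v ∧ N.isTreeN u ∧ N.isTreeN v

/-- Undirected adjacency in the subgraph induced by the tree nodes. -/
def treeAdj (u v : V) : Prop := N.isTreeN u ∧ N.isTreeN v ∧ (N.E u v ∨ N.E v u)

/-- The tree-node component of a tree node `u`. -/
def treeComp (u : V) : Set V := {v | Relation.ReflTransGen N.treeAdj u v}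

/-- Edge of the subgraph induced by the reticulate nodes. -/
def reticE (u v : V) : Prop := N.E u v ∧ N.isRetic u ∧ N.isRetic v

/-- Undirected adjacency in the subgraph induced by the reticulate nodes. -/
def reticAdj (u v : V) : Prop := N.isRetic u ∧ N.isRetic v ∧ (N.E u v ∨ N.E v u)

/-- The reticulation component of a reticulate node `u`. -/
def reticComp (u : V) : Set V := {v | Relation.ReflTransGen N.reticAdj u v}

open Classical in
/-- The compression quotient map: each tree node is sent to its tree-node component, each
reticulate node to its reticulation component, and every other node to itself (as a
singleton set). -/
noncomputable def comp (u : V) : Set V :=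
  if N.isTreeN u then N.treeComp u else if N.isRetic u then N.reticComp u else {u}

/-- Edge relation of the compression `N̄`: an edge between the (distinct) images of the
endpoints of each edge of `N`. -/
def compE (A B : Set V) : Prop :=
  A ≠ B ∧ ∃ u v, N.E u v ∧ N.comp u = A ∧ N.comp v = B

/-- `N` is binary: reticulate nodes have indegree exactly 2, tree nodes outdegree exactly 2. -/
def Binary : Prop :=
  (∀ v, N.isRetic v → indeg N.E v = 2) ∧ (∀ v, N.isTreeN v → outdeg N.E v = 2)

/-- `N` is galled: every reticulate node `r` has a tree-node ancestor `w` with two internally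
disjoint directed paths from `w` to `r` in which all nodes except `r` are tree nodes. -/
def Galled : Prop :=
  ∀ r, N.isRetic r → ∃ w p q, N.isTreeN w ∧
    N.IsDirPath w r p ∧ N.IsDirPath w r q ∧ p ≠ q ∧
    (∀ x ∈ p.tail.dropLast, x ∉ q.tail.dropLast) ∧
    (∀ x ∈ p, x ≠ r → N.isTreeN x) ∧ (∀ x ∈ q, x ≠ r → N.isTreeN x)

/-- The spanning subgraph determined by a switching `s` choosing one parent of each
reticulate node. -/
def SpanE (s : V → V) (u v : V) : Prop := N.E u v ∧ (N.isRetic v → u = s v)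

/-- `S` is displayed (as a softwired cluster) at `u`: for some switching, the set of leaves
below `u` in the resulting spanning tree is exactly `S`. -/
def DisplayedAt (S : Set V) (u : V) : Prop :=
  ∃ s : V → V, (∀ v, N.isRetic v → N.E (s v) v) ∧
    {ℓ | N.isLeaf ℓ ∧ Relation.ReflTransGen (N.SpanE s) u ℓ} = S

/-- An isolated reticulate node: neither its parents nor its child are reticulate. -/
def IsolatedRetic (w : V) : Prop :=
  N.isRetic w ∧ (∀ x, N.E x w → ¬ N.isRetic x) ∧ (∀ y, N.E w y → ¬ N.isRetic y)

end RPN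

/-!
Suppose a node `A` of `N̄` has children, all with at least two parents in `N̄`. A non-reticulate
node has a unique parent and is the only entry point of its own node of `N̄`, so every edge leaving
`A` enters a reticulate node; hence `A` is a tree-node component or a single redundant node, with a
top node `t` from which all of `A` is reached. Take `p = t` if `t` is the root or redundant, and
otherwise `p` the parent of `t`, which is reticulate or redundant with `t` as its only child; when
`p` is not the root it is visible and dominates some leaf `ℓ`.

Following unique children, every reticulate child of `A` leads to an *exit*, the first
non-reticulate node below it, and every non-reticulate node below `t` outside `A` lies below such an
exit. By well-founded induction along the ancestor order every exit is reachable from the root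
avoiding `p`: the reticulation component of the exit has a non-reticulate parent `w` outside `A`,
and either `w` is itself reachable avoiding `p`, or `w` lies below `p`, hence below an exit strictly
above the first one. If `p` is the root this is absurd at once; otherwise `ℓ` lies below an exit,
so `p` does not dominate `ℓ`.
-/

open Relation

section Degree

variable [Fintype V] {E : V → V → Prop} {u v w : V}

theorem one_le_indeg_of_edge (h : E u v) : 1 ≤ indeg E v :=
  (Set.ncard_pos (Set.toFinite _)).2 ⟨u, h⟩

theorem one_le_outdeg_of_edge (h : E v w) : 1 ≤ outdeg E v :=
  (Set.ncard_pos (Set.toFinite _)).2 ⟨w, h⟩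

theorem exists_edge_of_one_le_outdeg (h : 1 ≤ outdeg E v) : ∃ w, E v w :=
  (Set.ncard_pos (Set.toFinite _)).1 h

theorem eq_of_indeg_eq_one (h : indeg E v = 1) (hu : E u v) (hw : E w v) : u = w :=
  (Set.ncard_le_one (Set.toFinite _)).1 h.le u hu w hw

theorem eq_of_outdeg_eq_one (h : outdeg E v = 1) (hu : E v u) (hw : E v w) : u = w :=
  (Set.ncard_le_one (Set.toFinite _)).1 h.le u hu w hw

end Degree

namespace RPN

variable [Fintype V] (N : RPN V) {c m p t u v w x y z : V}

theorem wellFounded_transGen : WellFounded (TransGen N.E) :=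
  haveI : Std.Irrefl (TransGen N.E) := ⟨N.acyclic⟩
  Finite.wellFounded_of_trans_of_irrefl _

theorem wellFounded_swap_transGen : WellFounded (Function.swap (TransGen N.E)) :=
  haveI : IsTrans V (Function.swap (TransGen N.E)) := ⟨fun _ _ _ h h' => h'.trans h⟩
  haveI : Std.Irrefl (Function.swap (TransGen N.E)) := ⟨N.acyclic⟩
  Finite.wellFounded_of_trans_of_irrefl _

theorem ne_root_of_edge (h : N.E u v) : v ≠ N.root := by
  rintro rfl
  have := one_le_indeg_of_edge h
  rw [N.root_indeg] at this
  omega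

theorem exists_parent (hv : v ≠ N.root) : ∃ u, N.E u v := by
  rcases (N.reachable v).cases_tail with rfl | ⟨u, -, hu⟩
  exacts [absurd rfl hv, ⟨u, hu⟩]

theorem indeg_eq_one_of_not_isRetic (hv : v ≠ N.root) (h : ¬ N.isRetic v) : indeg N.E v = 1 := by
  obtain ⟨u, hu⟩ := N.exists_parent hv
  have := one_le_indeg_of_edge hu
  unfold isRetic at h
  omega

theorem eq_of_edges_of_not_isRetic (hv : ¬ N.isRetic v) (hu : N.E u v) (hw : N.E w v) : u = w :=
  eq_of_indeg_eq_one (N.indeg_eq_one_of_not_isRetic (N.ne_root_of_edge hu) hv) hu hw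

theorem outdeg_eq_one_of_isRetic (h : N.isRetic v) : outdeg N.E v = 1 := by
  have hv : v ≠ N.root := by rintro rfl; have := N.root_indeg; unfold isRetic at h; omega
  have := N.degree_cond v hv
  unfold isRetic at h
  omega

theorem eq_of_edges_of_isRetic (hv : N.isRetic v) (hu : N.E v u) (hw : N.E v w) : u = w :=
  eq_of_outdeg_eq_one (N.outdeg_eq_one_of_isRetic hv) hu hw

theorem not_isRetic_of_isTreeN (h : N.isTreeN v) : ¬ N.isRetic v := by
  rintro hr
  rcases h with rfl | ⟨h, -⟩ <;> unfold isRetic at hr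
  · rw [N.root_indeg] at hr; omega
  · omega

theorem not_isRetic_of_isLeaf (h : N.isLeaf v) : ¬ N.isRetic v := by
  unfold isRetic; rw [h.1]; omega

theorem not_edge_of_isLeaf (h : N.isLeaf v) : ¬ N.E v w := fun hvw => by
  have := one_le_outdeg_of_edge hvw
  rw [h.2] at this
  omega

theorem outdeg_eq_one_of_not_isTreeN (h : ¬ N.isTreeN v) (hvw : N.E v w) : outdeg N.E v = 1 := by
  have hv : v ≠ N.root := fun hv => h (.inl hv)
  have := one_le_outdeg_of_edge hvw
  have := N.degree_cond v hv
  have : ¬ (indeg N.E v = 1 ∧ 2 ≤ outdeg N.E v) := fun h' => h (.inr h')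
  omega

theorem isRetic_or_isRedund_of_not_isTreeN (h : ¬ N.isTreeN v) (hvw : N.E v w) :
    N.isRetic v ∨ N.isRedund v :=
  or_iff_not_imp_left.2 fun hr =>
    ⟨N.indeg_eq_one_of_not_isRetic (fun hv => h (.inl hv)) hr,
      N.outdeg_eq_one_of_not_isTreeN h hvw⟩

/-! ### Nodes of the compression -/

instance : Std.Symm N.treeAdj := ⟨fun _ _ ⟨hu, hv, h⟩ => ⟨hv, hu, h.symm⟩⟩

instance : Std.Symm N.reticAdj := ⟨fun _ _ ⟨hu, hv, h⟩ => ⟨hv, hu, h.symm⟩⟩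

theorem isTreeN_of_mem_treeComp (hu : N.isTreeN u) (hv : v ∈ N.treeComp u) : N.isTreeN v := by
  rcases hv.cases_tail with rfl | ⟨_, -, h⟩
  exacts [hu, h.2.1]

theorem isRetic_of_mem_reticComp (hu : N.isRetic u) (hv : v ∈ N.reticComp u) : N.isRetic v := by
  rcases hv.cases_tail with rfl | ⟨_, -, h⟩
  exacts [hu, h.2.1]

theorem comp_of_isTreeN (h : N.isTreeN u) : N.comp u = N.treeComp u := by
  simp only [comp, if_pos h]

theorem comp_of_isRetic (h : N.isRetic u) : N.comp u = N.reticComp u := by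
  simp only [comp, if_neg fun ht => N.not_isRetic_of_isTreeN ht h, if_pos h]

theorem comp_of_not_isTreeN_of_not_isRetic (ht : ¬ N.isTreeN u) (hr : ¬ N.isRetic u) :
    N.comp u = {u} := by
  simp only [comp, if_neg ht, if_neg hr]

theorem mem_comp_self (u : V) : u ∈ N.comp u := by
  unfold comp
  split_ifs
  exacts [.refl, .refl, rfl]

theorem comp_eq_of_mem (hv : v ∈ N.comp u) : N.comp v = N.comp u := by
  by_cases ht : N.isTreeN u
  · rw [N.comp_of_isTreeN ht] at hv ⊢
    rw [N.comp_of_isTreeN (N.isTreeN_of_mem_treeComp ht hv)]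
    exact Set.ext fun _ => ⟨hv.trans, (symm hv).trans⟩
  by_cases hr : N.isRetic u
  · rw [N.comp_of_isRetic hr] at hv ⊢
    rw [N.comp_of_isRetic (N.isRetic_of_mem_reticComp hr hv)]
    exact Set.ext fun _ => ⟨hv.trans, (symm hv).trans⟩
  · rw [N.comp_of_not_isTreeN_of_not_isRetic ht hr] at hv
    rw [hv]

theorem mem_comp_iff : v ∈ N.comp u ↔ N.comp v = N.comp u :=
  ⟨N.comp_eq_of_mem, fun h => h ▸ N.mem_comp_self v⟩

theorem mem_comp_of_treeAdj (h : N.treeAdj u v) : v ∈ N.comp u := by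
  rw [N.comp_of_isTreeN h.1]
  exact .single h

theorem mem_comp_of_reticAdj (h : N.reticAdj u v) : v ∈ N.comp u := by
  rw [N.comp_of_isRetic h.1]
  exact .single h

theorem eq_of_mem_comp_of_isLeaf (hv : N.isLeaf v) (hu : u ∈ N.comp v) : u = v := by
  have hvt : ¬ N.isTreeN v := by
    rintro (rfl | ⟨-, h⟩)
    · exact N.not_edge_of_isLeaf hv (exists_edge_of_one_le_outdeg N.root_outdeg).choose_spec
    · rw [hv.2] at h; omega
  rwa [N.comp_of_not_isTreeN_of_not_isRetic hvt (N.not_isRetic_of_isLeaf hv)] at hu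

/-! ### Tops of tree-node components -/

def IsTop (t : V) : Prop := N.isTreeN t ∧ ∀ q, N.E q t → ¬ N.isTreeN q

theorem exists_isTop_mem_treeComp (hu : N.isTreeN u) : ∃ t, N.IsTop t ∧ u ∈ N.treeComp t := by
  induction u using N.wellFounded_transGen.induction with
  | _ u ih =>
  by_cases htop : ∃ q, N.E q u ∧ N.isTreeN q
  · obtain ⟨q, hqu, hq⟩ := htop
    obtain ⟨t, ht, hqt⟩ := ih q (.single hqu) hq
    exact ⟨t, ht, hqt.tail ⟨hq, hu, .inl hqu⟩⟩
  · exact ⟨u, ⟨hu, fun q hqu hq => htop ⟨q, hqu, hq⟩⟩, .refl⟩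

section
variable {N}

theorem IsTop.reflTransGen_treeE (ht : N.IsTop t) (hv : v ∈ N.treeComp t) :
    ReflTransGen N.treeE t v := by
  induction hv with
  | refl => exact .refl
  | @tail b c _ hbc ih =>
    obtain ⟨hb, hc, hbc | hcb⟩ := hbc
    · exact ih.tail ⟨hbc, hb, hc⟩
    -- `c` is the parent of `b ≠ t`, so it is the last node before `b` on the path from `t`
    rcases ih.cases_tail with rfl | ⟨q, htq, hqb⟩
    · exact absurd hc (ht.2 c hcb)
    · rwa [N.eq_of_edges_of_not_isRetic (N.not_isRetic_of_isTreeN hb) hcb hqb.1]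

theorem IsTop.reflTransGen (ht : N.IsTop t) (hv : v ∈ N.comp t) : ReflTransGen N.E t v := by
  rw [N.comp_of_isTreeN ht.1] at hv
  exact ReflTransGen.mono (fun _ _ h => h.1) _ _ (ht.reflTransGen_treeE hv)

theorem IsTop.eq_of_mem_treeComp (ht : N.IsTop t) (hv : N.IsTop v) (h : v ∈ N.treeComp t) :
    v = t := by
  rcases (ht.reflTransGen_treeE h).cases_tail with rfl | ⟨q, -, hq⟩
  exacts [rfl, absurd hq.2.1 (hv.2 q hq.1)]

end

theorem isTop_of_edge_of_not_mem_comp (hy : N.isTreeN y) (hxy : N.E x y) (hx : x ∉ N.comp y) :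
    N.IsTop y :=
  ⟨hy, fun _ hqy hq => hx <|
    N.eq_of_edges_of_not_isRetic (N.not_isRetic_of_isTreeN hy) hqy hxy ▸
      N.mem_comp_of_treeAdj ⟨hy, hq, .inr hqy⟩⟩

theorem eq_of_edges_into_comp (hy : ¬ N.isRetic y) (hxy : N.E x y) (hx : x ∉ N.comp y)
    (hwz : N.E w z) (hw : w ∉ N.comp y) (hz : z ∈ N.comp y) : z = y := by
  by_cases hyt : N.isTreeN y
  · have hzt : z ∈ N.treeComp y := N.comp_of_isTreeN hyt ▸ hz
    have hw' : w ∉ N.comp z := by rwa [N.comp_eq_of_mem hz]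
    exact (N.isTop_of_edge_of_not_mem_comp hyt hxy hx).eq_of_mem_treeComp
      (N.isTop_of_edge_of_not_mem_comp (N.isTreeN_of_mem_treeComp hyt hzt) hwz hw') hzt
  · rwa [N.comp_of_not_isTreeN_of_not_isRetic hyt hy] at hz

theorem ncard_compE_le_one (hxy : N.E x y) (hy : ¬ N.isRetic y) (hx : x ∉ N.comp y) :
    Set.ncard {C | N.compE C (N.comp y)} ≤ 1 := by
  have hC : ∀ C ∈ {C | N.compE C (N.comp y)}, C = N.comp x := by
    rintro C ⟨hC, w, z, hwz, rfl, hz⟩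
    have hw : w ∉ N.comp y := fun h => hC (N.comp_eq_of_mem h)
    obtain rfl := N.eq_of_edges_into_comp hy hxy hx hwz hw (N.mem_comp_iff.2 hz)
    rw [N.eq_of_edges_of_not_isRetic hy hwz hxy]
  exact (Set.ncard_le_one (Set.toFinite _)).2 fun A hA B hB => (hC A hA).trans (hC B hB).symm

theorem exists_edge_into_reticComp (hy : N.isRetic y)
    (h : 1 < Set.ncard {C | N.compE C (N.comp y)}) (u : V) :
    ∃ w z, N.E w z ∧ z ∈ N.reticComp y ∧ N.comp w ≠ N.comp u ∧ ¬ N.isRetic w := by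
  obtain ⟨C₁, C₂, hC₁, hC₂, hne⟩ := (Set.one_lt_ncard_iff (Set.toFinite _)).1 h
  obtain ⟨C, ⟨hC, w, z, hwz, rfl, hz⟩, hCu⟩ :
      ∃ C, N.compE C (N.comp y) ∧ C ≠ N.comp u := by
    by_cases h₁ : C₁ = N.comp u
    exacts [⟨C₂, hC₂, fun h₂ => hne (h₁.trans h₂.symm)⟩, ⟨C₁, hC₁, h₁⟩]
  have hzy : z ∈ N.reticComp y := N.comp_of_isRetic hy ▸ N.mem_comp_iff.2 hz
  refine ⟨w, z, hwz, hzy, hCu, fun hw => hC ?_⟩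
  rw [← hz, N.comp_eq_of_mem (N.mem_comp_of_reticAdj
    ⟨N.isRetic_of_mem_reticComp hy hzy, hw, .inr hwz⟩)]

/-! ### Exits of reticulation components -/

def ReticExit (z c : V) : Prop := ∃ r, ReflTransGen N.reticE z r ∧ N.E r c ∧ ¬ N.isRetic c

section
variable {N}

theorem ReticExit.reflTransGen (h : N.ReticExit z c) : ReflTransGen N.E z c := by
  obtain ⟨r, hzr, hrc, -⟩ := h
  exact (ReflTransGen.mono (fun _ _ h => h.1) _ _ hzr).tail hrc

theorem ReticExit.eq_of_edge (h : N.ReticExit z c) (hz : N.isRetic z) (hzw : N.E z w)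
    (hw : ¬ N.isRetic w) : w = c := by
  obtain ⟨r, hzr, hrc, -⟩ := h
  rcases hzr.cases_head with rfl | ⟨m, hzm, -⟩
  · exact N.eq_of_edges_of_isRetic hz hzw hrc
  · exact absurd (N.eq_of_edges_of_isRetic hz hzm.1 hzw ▸ hzm.2.2) hw

theorem ReticExit.of_edge (h : N.ReticExit z c) (hz : N.isRetic z) (hzw : N.E z w)
    (hw : N.isRetic w) : N.ReticExit w c := by
  obtain ⟨r, hzr, hrc, hc⟩ := h
  rcases hzr.cases_head with rfl | ⟨m, hzm, hmr⟩
  · exact absurd (N.eq_of_edges_of_isRetic hz hzw hrc ▸ hw) hc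
  · exact ⟨r, N.eq_of_edges_of_isRetic hz hzm.1 hzw ▸ hmr, hrc, hc⟩

theorem reticExit_iff_of_reticE (h : N.reticE z w) : N.ReticExit z c ↔ N.ReticExit w c :=
  ⟨fun hz => ReticExit.of_edge hz h.2.1 h.1 h.2.2,
    fun ⟨r, hwr, hrc, hc⟩ => ⟨r, .head h hwr, hrc, hc⟩⟩

theorem ReticExit.of_mem_reticComp (h : N.ReticExit y c) (hz : z ∈ N.reticComp y) :
    N.ReticExit z c := by
  induction hz with
  | refl => exact h
  | tail _ hadj ih =>
    obtain ⟨ha, hb, hab | hba⟩ := hadj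
    · exact (reticExit_iff_of_reticE ⟨hab, ha, hb⟩).1 ih
    · exact (reticExit_iff_of_reticE ⟨hba, hb, ha⟩).2 ih

end

theorem exists_reticExit (hz : N.isRetic z) : ∃ c, N.ReticExit z c := by
  induction z using N.wellFounded_swap_transGen.induction with
  | _ z ih =>
  obtain ⟨w, hzw⟩ := exists_edge_of_one_le_outdeg (N.outdeg_eq_one_of_isRetic hz).ge
  by_cases hw : N.isRetic w
  · obtain ⟨c, r, hwr, hrc, hc⟩ := ih w (.single hzw) hw
    exact ⟨c, r, .head ⟨hzw, hz, hw⟩ hwr, hrc, hc⟩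
  · exact ⟨w, z, .refl, hzw, hw⟩

/-! ### Reachability avoiding a node -/

def ReachAvoiding (p v : V) : Prop :=
  N.root ≠ p ∧ ReflTransGen (fun x y => N.E x y ∧ y ≠ p) N.root v

section
variable {N}

theorem ReachAvoiding.tail (h : N.ReachAvoiding p v) (hvw : N.E v w) (hw : w ≠ p) :
    N.ReachAvoiding p w :=
  ⟨h.1, h.2.tail ⟨hvw, hw⟩⟩

theorem ReachAvoiding.trans_of_not_reflTransGen (h : N.ReachAvoiding p v)
    (hvw : ReflTransGen N.E v w) (hvp : ¬ ReflTransGen N.E v p) : N.ReachAvoiding p w := by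
  induction hvw with
  | refl => exact h
  | tail hvb hbc ih => exact ih.tail hbc fun hcp => hvp (hcp ▸ hvb.tail hbc)

theorem ReachAvoiding.of_reticExit (h : N.ReachAvoiding p z) (hzc : N.ReticExit z c)
    (hm : ∀ m, N.isRetic m → N.ReticExit m c → m ≠ p) (hc : c ≠ p) :
    N.ReachAvoiding p c := by
  obtain ⟨r, hzr, hrc, hcr⟩ := hzc
  induction hzr using ReflTransGen.head_induction_on with
  | refl => exact h.tail hrc hc
  | head hab hbr ih => exact ih (h.tail hab.1 (hm _ hab.2.2 ⟨r, hbr, hrc, hcr⟩))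

theorem ReachAvoiding.not_dominates (h : N.ReachAvoiding p v) : ¬ N.Dominates p v := by
  obtain ⟨hrp, hv⟩ := h
  obtain ⟨l, hl, hlast⟩ := List.exists_isChain_cons_of_relationReflTransGen hv
  intro hdom
  have hpath : N.IsDirPath N.root v (N.root :: l) :=
    ⟨rfl, by rw [List.getLast?_eq_some_getLast (List.cons_ne_nil _ _), hlast],
      hl.imp fun _ _ h => h.1⟩
  rcases List.mem_cons.1 (hdom _ hpath) with hp | hp
  · exact hrp hp.symm
  · exact hl.cons_induction (· ≠ p) l (fun _ _ h _ => h.2) hrp p hp rfl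

end

theorem reachAvoiding_or_reflTransGen (p v : V) :
    N.ReachAvoiding p v ∨ ReflTransGen N.E p v := by
  induction N.reachable v with
  | refl =>
    by_cases hp : N.root = p
    exacts [.inr (hp ▸ .refl), .inl ⟨hp, .refl⟩]
  | @tail b c _ hbc ih =>
    rcases ih with ih | ih
    · by_cases hcp : c = p
      exacts [.inr (hcp ▸ .refl), .inl (ih.tail hbc hcp)]
    · exact .inr (ih.tail hbc)

def IsChildExit (A : Set V) (c : V) : Prop :=
  ∃ x ∈ A, ∃ y, N.E x y ∧ y ∉ A ∧ N.ReticExit y c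

section
variable {N}

theorem IsChildExit.transGen (hreach : ∀ x ∈ N.comp t, ReflTransGen N.E t x)
    (hc : N.IsChildExit (N.comp t) c) : TransGen N.E t c := by
  obtain ⟨x, hx, y, hxy, -, hyc⟩ := hc
  exact .trans_right (hreach x hx) (.head' hxy hyc.reflTransGen)

end

theorem exists_isChildExit_of_reflTransGen
    (hretic : ∀ x ∈ N.comp t, ∀ y, N.E x y → y ∉ N.comp t → N.isRetic y)
    (htw : ReflTransGen N.E t w) (hw : w ∉ N.comp t) :
    ∃ c, N.IsChildExit (N.comp t) c ∧
      (ReflTransGen N.E c w ∨ N.isRetic w ∧ N.ReticExit w c) := by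
  induction htw with
  | refl => exact absurd (N.mem_comp_self t) hw
  | @tail q w _ hqw ih =>
    by_cases hq : q ∈ N.comp t
    · have hwr := hretic q hq w hqw hw
      obtain ⟨c, hc⟩ := N.exists_reticExit hwr
      exact ⟨c, ⟨q, hq, w, hqw, hw, hc⟩, .inr ⟨hwr, hc⟩⟩
    obtain ⟨c, hc, hcq | ⟨hqr, hqc⟩⟩ := ih hq
    · exact ⟨c, hc, .inl (hcq.tail hqw)⟩
    by_cases hwr : N.isRetic w
    · exact ⟨c, hc, .inr ⟨hwr, hqc.of_edge hqr hqw hwr⟩⟩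
    · exact ⟨c, hc, .inl (hqc.eq_of_edge hqr hqw hwr ▸ .refl)⟩

theorem exists_isChildExit_of_not_isRetic
    (hretic : ∀ x ∈ N.comp t, ∀ y, N.E x y → y ∉ N.comp t → N.isRetic y)
    (htw : ReflTransGen N.E t w) (hw : w ∉ N.comp t) (hwr : ¬ N.isRetic w) :
    ∃ c, N.IsChildExit (N.comp t) c ∧ ReflTransGen N.E c w := by
  obtain ⟨c, hc, hcw | ⟨hwr', -⟩⟩ := N.exists_isChildExit_of_reflTransGen hretic htw hw
  exacts [⟨c, hc, hcw⟩, absurd hwr' hwr]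

theorem isRetic_of_edge_of_forall_one_lt_ncard
    (hmany : ∀ B, N.compE (N.comp t) B → 1 < Set.ncard {C | N.compE C B}) :
    ∀ x ∈ N.comp t, ∀ y, N.E x y → y ∉ N.comp t → N.isRetic y := by
  intro x hx y hxy hy
  by_contra hyr
  have hty : N.comp t ≠ N.comp y := fun h => hy (N.mem_comp_iff.2 h.symm)
  have hx' : x ∉ N.comp y := fun h => hty ((N.comp_eq_of_mem hx).symm.trans (N.comp_eq_of_mem h))
  exact (hmany _ ⟨hty, x, y, hxy, N.comp_eq_of_mem hx, rfl⟩).not_ge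
    (N.ncard_compE_le_one hxy hyr hx')

def IsGate (p t : V) : Prop := p = t ∨ N.E p t ∧ ∀ m, N.E p m → m = t

section
variable {N}

theorem IsGate.reflTransGen (hp : N.IsGate p t) :
    ReflTransGen N.E p t := by
  rcases hp with rfl | ⟨hpt, -⟩
  exacts [.refl, .single hpt]

theorem IsGate.reflTransGen_of_reflTransGen (hp : N.IsGate p t)
    (hpv : ReflTransGen N.E p v) (hv : v ≠ p) : ReflTransGen N.E t v := by
  rcases hp with rfl | ⟨-, hpt⟩
  · exact hpv
  rcases hpv.cases_head with rfl | ⟨m, hpm, hmv⟩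
  exacts [absurd rfl hv, hpt m hpm ▸ hmv]

theorem IsChildExit.not_reflTransGen (hreach : ∀ x ∈ N.comp t, ReflTransGen N.E t x)
    (hp : N.IsGate p t) (hc : N.IsChildExit (N.comp t) c) :
    ¬ ReflTransGen N.E c p := fun hcp =>
  N.acyclic t ((hc.transGen hreach).trans_left (hcp.trans hp.reflTransGen))

theorem IsGate.ne_of_reticExit (hp : N.IsGate p t) (ht : ¬ N.isRetic t)
    (hreach : ∀ x ∈ N.comp t, ReflTransGen N.E t x) (hc : N.IsChildExit (N.comp t) c)
    (hm : N.isRetic m) (hmc : N.ReticExit m c) : m ≠ p := by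
  rintro rfl
  rcases hp with rfl | ⟨hmt, -⟩
  · exact ht hm
  · obtain rfl := hmc.eq_of_edge hm hmt ht
    exact N.acyclic _ (hc.transGen hreach)

end

theorem reachAvoiding_of_isChildExit (ht : ¬ N.isRetic t)
    (hreach : ∀ x ∈ N.comp t, ReflTransGen N.E t x)
    (hmany : ∀ B, N.compE (N.comp t) B → 1 < Set.ncard {C | N.compE C B})
    (hp : N.IsGate p t) (hc : N.IsChildExit (N.comp t) c) :
    N.ReachAvoiding p c := by
  have hretic := N.isRetic_of_edge_of_forall_one_lt_ncard hmany
  induction c using N.wellFounded_transGen.induction with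
  | _ c ih =>
  obtain ⟨x, hx, y, hxy, hy, hyc⟩ := id hc
  have hyr := hretic x hx y hxy hy
  obtain ⟨w, z, hwz, hz, hwt, hw⟩ := N.exists_edge_into_reticComp hyr
    (hmany _ ⟨fun h => hy (N.mem_comp_iff.2 h.symm), x, y, hxy, N.comp_eq_of_mem hx, rfl⟩) t
  have hzc : N.ReticExit z c := hyc.of_mem_reticComp hz
  have hzr : N.isRetic z := N.isRetic_of_mem_reticComp hyr hz
  have hwc : N.ReachAvoiding p w → N.ReachAvoiding p c := fun h =>
    (h.tail hwz (hp.ne_of_reticExit ht hreach hc hzr hzc)).of_reticExit hzc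
      (fun _ => hp.ne_of_reticExit ht hreach hc)
      fun hcp => hc.not_reflTransGen hreach hp (hcp ▸ .refl)
  by_contra hnot
  have hpw := (N.reachAvoiding_or_reflTransGen p w).resolve_left (mt hwc hnot)
  have hwp : w ≠ p := by
    rintro rfl
    rcases hp with rfl | ⟨-, hpt⟩
    · exact hwt rfl
    · exact ht (hpt z hwz ▸ hzr)
  obtain ⟨c', hc', hc'w⟩ := N.exists_isChildExit_of_not_isRetic hretic
    (hp.reflTransGen_of_reflTransGen hpw hwp) (fun h => hwt (N.comp_eq_of_mem h)) hw
  have hc'c : TransGen N.E c' c := .trans_right hc'w (.head' hwz hzc.reflTransGen)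
  exact hnot (hwc ((ih c' hc'c hc').trans_of_not_reflTransGen hc'w
    (hc'.not_reflTransGen hreach hp)))

theorem not_forall_one_lt_ncard_compE (ht : ¬ N.isRetic t)
    (hreach : ∀ x ∈ N.comp t, ReflTransGen N.E t x)
    (hp : N.IsGate p t) (hvis : p ≠ N.root → N.Visible p)
    (hx : x ∈ N.comp t) (hxy : N.E x y) (hy : y ∉ N.comp t) :
    ¬ ∀ B, N.compE (N.comp t) B → 1 < Set.ncard {C | N.compE C B} := by
  intro hmany
  have hretic := N.isRetic_of_edge_of_forall_one_lt_ncard hmany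
  by_cases hroot : p = N.root
  · obtain ⟨c, hc⟩ := N.exists_reticExit (hretic x hx y hxy hy)
    exact (N.reachAvoiding_of_isChildExit ht hreach hmany hp
      ⟨x, hx, y, hxy, hy, hc⟩).1 hroot.symm
  obtain ⟨ℓ, hℓ, hdom⟩ := hvis hroot
  have hℓt : ℓ ∉ N.comp t := fun h =>
    N.not_edge_of_isLeaf hℓ (N.eq_of_mem_comp_of_isLeaf hℓ (N.comp_eq_of_mem h ▸ hx) ▸ hxy)
  have hℓp : ℓ ≠ p := by
    rintro rfl
    rcases hp with rfl | ⟨hℓt', -⟩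
    exacts [hℓt (N.mem_comp_self ℓ), N.not_edge_of_isLeaf hℓ hℓt']
  have hpℓ := (N.reachAvoiding_or_reflTransGen p ℓ).resolve_left fun h => h.not_dominates hdom
  obtain ⟨c, hc, hcℓ⟩ := N.exists_isChildExit_of_not_isRetic hretic
    (hp.reflTransGen_of_reflTransGen hpℓ hℓp) hℓt (N.not_isRetic_of_isLeaf hℓ)
  exact ((N.reachAvoiding_of_isChildExit ht hreach hmany hp hc).trans_of_not_reflTransGen hcℓ
    (hc.not_reflTransGen hreach hp)).not_dominates hdom

end RPN

/-- The compression of a reticulation-visible network is tree-child: every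
non-leaf node of the compression has a child that is not a reticulate node of the
compression. -/
theorem stmt15 [Fintype V] (N : RPN V)
    (hrv : ∀ v, (N.isRetic v ∨ N.isRedund v) → N.Visible v) :
    ∀ A ∈ Set.range N.comp, (∃ B, N.compE A B) →
      ∃ B, N.compE A B ∧ Set.ncard {C | N.compE C B} ≤ 1 := by
  rintro A - ⟨B, hAB, u, v, huv, rfl, rfl⟩
  by_contra! hmany
  have hv : v ∉ N.comp u := fun h => hAB (N.comp_eq_of_mem h).symm
  have hvr := N.isRetic_of_edge_of_forall_one_lt_ncard hmany u (N.mem_comp_self u) v huv hv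
  have hu : ¬ N.isRetic u := fun hu => hv (N.mem_comp_of_reticAdj ⟨hu, hvr, .inl huv⟩)
  by_cases htree : N.isTreeN u
  · obtain ⟨t, ht, hut⟩ := N.exists_isTop_mem_treeComp htree
    have hcomp : N.comp u = N.comp t := N.comp_eq_of_mem (N.comp_of_isTreeN ht.1 ▸ hut)
    rw [hcomp] at hmany hv
    have hum : u ∈ N.comp t := hcomp ▸ N.mem_comp_self u
    have htr := N.not_isRetic_of_isTreeN ht.1
    by_cases hroot : t = N.root
    · exact N.not_forall_one_lt_ncard_compE htr (fun _ => ht.reflTransGen) (.inl rfl)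
        (absurd hroot) hum huv hv hmany
    obtain ⟨p, hpt⟩ := N.exists_parent hroot
    have hp := ht.2 p hpt
    have hpout := N.outdeg_eq_one_of_not_isTreeN hp hpt
    exact N.not_forall_one_lt_ncard_compE htr (fun _ => ht.reflTransGen)
      (.inr ⟨hpt, fun m hpm => eq_of_outdeg_eq_one hpout hpm hpt⟩)
      (fun _ => hrv p (N.isRetic_or_isRedund_of_not_isTreeN hp hpt)) hum huv hv hmany
  · have hcomp := N.comp_of_not_isTreeN_of_not_isRetic htree hu
    exact N.not_forall_one_lt_ncard_compE hu (fun x hx => by rw [hcomp] at hx; rw [hx])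
      (.inl rfl) (fun _ => hrv u (N.isRetic_or_isRedund_of_not_isTreeN htree huv))
      (N.mem_comp_self u) huv hv hmany
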